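/- Let m > 0, n ≥ 1, let c(n,P) solve c = (|P|-c)/sqrt(m²n²+(|P|-c)²) in [0,1), and set E₀⁽ⁿ⁾(P) := ½ c(n,P)² + sqrt(m²n² + (|P|-c(n,P))²). Then the derivative of E₀⁽ⁿ⁾(P) with respect to |P| equals c(n,P). -/

import Mathlib

/-!
`E₀⁽ⁿ⁾(p) = F(c(p), p)` with `F(x, p) = x²/2 + √(m²n² + (p - x)²)`. The equation defining `c`
is `∂ₓF = 0`, so in the chain rule the terms carrying `c'` cancel (envelope principle) and
`dE₀⁽ⁿ⁾/dp = ∂ₚF = (p - c)/√(m²n² + (p - c)²) = c`.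
-/

theorem HasDerivAt.sqrt_const_add_sq {g : ℝ → ℝ} {g' a p : ℝ} (ha : 0 < a)
    (hg : HasDerivAt g g' p) :
    HasDerivAt (fun q => √(a + g q ^ 2)) (g p / √(a + g p ^ 2) * g') p := by
  have hpos : 0 < a + g p ^ 2 := by positivity
  convert ((hg.fun_pow 2).const_add a).sqrt hpos.ne' using 1
  field_simp
  ring

theorem hasDerivAt_threshold_comp {c : ℝ → ℝ} {c' a p : ℝ} (ha : 0 < a)
    (hc : HasDerivAt c c' p) :
    HasDerivAt (fun q => c q ^ 2 / 2 + √(a + (q - c q) ^ 2))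
      (c p * c' + (p - c p) / √(a + (p - c p) ^ 2) * (1 - c')) p := by
  have hsq : HasDerivAt (fun q => c q ^ 2 / 2) (c p * c') p :=
    ((hc.fun_pow 2).div_const 2).congr_deriv (by norm_num; ring)
  exact hsq.add (((hasDerivAt_id p).sub hc).sqrt_const_add_sq ha)

theorem deriv_threshold_eq_c
    (m : ℝ) (hm : 0 < m) (n : ℕ) (hn : 1 ≤ n)
    (c : ℝ → ℝ) (p c' : ℝ) (hp : 0 ≤ p)
    (hc : ∀ q : ℝ, 0 ≤ q → c q ∈ Set.Ico (0 : ℝ) 1 ∧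
      c q = (q - c q) / Real.sqrt (m ^ 2 * (n : ℝ) ^ 2 + (q - c q) ^ 2))
    (hderiv : HasDerivAt c c' p) :
    HasDerivAt
      (fun q => (c q) ^ 2 / 2 + Real.sqrt (m ^ 2 * (n : ℝ) ^ 2 + (q - c q) ^ 2))
      (c p) p := by
  obtain ⟨-, hfix⟩ := hc p hp
  have hn' : (0 : ℝ) < n := by exact_mod_cast hn
  convert hasDerivAt_threshold_comp (a := m ^ 2 * (n : ℝ) ^ 2) (by positivity) hderiv using 1
  rw [← hfix]
  ring
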